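/- Let r satisfy the relativistic two-body equation and let h(t) = r(t) × r'(t). Then the vector-valued function t ↦ exp(4ε/‖r(t)‖) • h(t) is constant in t; that is, exp(4ε/‖r(t)‖) • h(t) = exp(4ε/‖r(0)‖) • h(0) for all t. -/

import Mathlib

noncomputable def cross3 (a b : EuclideanSpace ℝ (Fin 3)) : EuclideanSpace ℝ (Fin 3) :=
  WithLp.toLp 2 ![a 1 * b 2 - a 2 * b 1, a 2 * b 0 - a 0 * b 2, a 0 * b 1 - a 1 * b 0]

/-!
Along an orbit of the equation the acceleration is `a • r + b • r'` with
`b = 4 ε ⟪r, r'⟫ / ‖r‖³`, so `h' = r × r'' = b • h`. The same `b` is `-(d/dt) (4 ε / ‖r‖)`,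
hence `exp (4 ε / ‖r‖)` is an integrating factor for `h' = b • h`.
-/

open Real
open scoped RealInnerProductSpace

local notation "ℝ³" => EuclideanSpace ℝ (Fin 3)

theorem HasDerivAt.norm {F : Type*} [NormedAddCommGroup F] [InnerProductSpace ℝ F]
    {f : ℝ → F} {f' : F} {x : ℝ} (hf : HasDerivAt f f' x) (h0 : f x ≠ 0) :
    HasDerivAt (fun y => ‖f y‖) (⟪f x, f'⟫ / ‖f x‖) x := by
  have hpos : 0 < ‖f x‖ := norm_pos_iff.mpr h0
  have := hf.norm_sq.sqrt (by positivity)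
  simp only [sqrt_sq (norm_nonneg _)] at this
  convert this using 1
  field_simp

theorem HasDerivAt.const_div_norm {F : Type*} [NormedAddCommGroup F] [InnerProductSpace ℝ F]
    {f : ℝ → F} {f' : F} {x : ℝ} (k : ℝ) (hf : HasDerivAt f f' x) (h0 : f x ≠ 0) :
    HasDerivAt (fun y => k / ‖f y‖) (-(k * ⟪f x, f'⟫ / ‖f x‖ ^ 3)) x :=
  (((hf.norm h0).inv (norm_ne_zero_iff.mpr h0)).const_mul k).congr_deriv (by ring)

theorem exp_smul_eq_exp_smul_of_hasDerivAt {E : Type*} [NormedAddCommGroup E] [NormedSpace ℝ E]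
    {f c : ℝ → ℝ} {h : ℝ → E} (hf : ∀ t, HasDerivAt f (-c t) t)
    (hh : ∀ t, HasDerivAt h (c t • h t) t) (t s : ℝ) :
    exp (f t) • h t = exp (f s) • h s := by
  have hd : ∀ t, HasDerivAt (fun t => exp (f t) • h t) 0 t := fun t => by
    convert! (hf t).exp.smul (hh t) using 1
    simp [smul_smul]
  exact is_const_of_deriv_eq_zero (fun t => (hd t).differentiableAt) (fun t => (hd t).deriv) t s

section cross3

variable (k : ℝ) (a b c : ℝ³)

theorem cross3_add_left : cross3 (a + b) c = cross3 a c + cross3 b c := by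
  ext i; fin_cases i <;> simp [cross3] <;> ring

theorem cross3_add_right : cross3 a (b + c) = cross3 a b + cross3 a c := by
  ext i; fin_cases i <;> simp [cross3] <;> ring

theorem cross3_smul_left : cross3 (k • a) b = k • cross3 a b := by
  ext i; fin_cases i <;> simp [cross3] <;> ring

theorem cross3_smul_right : cross3 a (k • b) = k • cross3 a b := by
  ext i; fin_cases i <;> simp [cross3] <;> ring

theorem cross3_self : cross3 a a = 0 := by
  ext i; fin_cases i <;> simp [cross3] <;> ring

end cross3

noncomputable def cross3CLM : ℝ³ →L[ℝ] ℝ³ →L[ℝ] ℝ³ :=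
  LinearMap.toContinuousLinearMap <| LinearMap.toContinuousLinearMap.toLinearMap ∘ₗ
    LinearMap.mk₂ ℝ cross3 cross3_add_left cross3_smul_left cross3_add_right cross3_smul_right

theorem HasDerivAt.cross3 {u v : ℝ → ℝ³} {u' v' : ℝ³} {t : ℝ} (hu : HasDerivAt u u' t)
    (hv : HasDerivAt v v' t) :
    HasDerivAt (fun s => cross3 (u s) (v s)) (cross3 (u t) v' + cross3 u' (v t)) t :=
  cross3CLM.hasDerivAt_of_bilinear (fun _ => hu) (fun _ => hv)

theorem hasDerivAt_cross3_deriv {r : ℝ → ℝ³} {t a b : ℝ}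
    (hr : DifferentiableAt ℝ r t) (hv : DifferentiableAt ℝ (deriv r) t)
    (hacc : deriv (deriv r) t = a • r t + b • deriv r t) :
    HasDerivAt (fun s => cross3 (r s) (deriv r s)) (b • cross3 (r t) (deriv r t)) t := by
  simpa [hacc, cross3_add_right, cross3_smul_right, cross3_self] using
    hr.hasDerivAt.cross3 hv.hasDerivAt

theorem angular_momentum_invariant (ε : ℝ) (r : ℝ → EuclideanSpace ℝ (Fin 3))
    (hr : ContDiff ℝ 2 r) (hrne : ∀ t, r t ≠ 0)
    (heq : ∀ t, deriv (deriv r) t =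
      (-(1 / ‖r t‖ ^ 3)) • r t +
        (ε / ‖r t‖ ^ 3) •
          ((4 / ‖r t‖ - ‖deriv r t‖ ^ 2) • r t +
            (4 * (inner ℝ (r t) (deriv r t) : ℝ)) • deriv r t))
    (h : ℝ → EuclideanSpace ℝ (Fin 3))
    (hh : ∀ t, h t = cross3 (r t) (deriv r t)) :
    ∀ t : ℝ, Real.exp (4 * ε / ‖r t‖) • h t = Real.exp (4 * ε / ‖r 0‖) • h 0 := by
  obtain rfl : h = fun t => cross3 (r t) (deriv r t) := funext hh
  have hrd : Differentiable ℝ r := hr.differentiable (by norm_num)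
  have hvd : Differentiable ℝ (deriv r) := hr.differentiable_deriv_two
  refine fun t => exp_smul_eq_exp_smul_of_hasDerivAt
    (f := fun s => 4 * ε / ‖r s‖) (h := fun s => cross3 (r s) (deriv r s))
    (c := fun s => 4 * ε * ⟪r s, deriv r s⟫ / ‖r s‖ ^ 3) (fun s => ?_) (fun s => ?_) t 0
  · exact (hrd s).hasDerivAt.const_div_norm (4 * ε) (hrne s)
  · refine hasDerivAt_cross3_deriv (hrd s) (hvd s)
      (a := -(1 / ‖r s‖ ^ 3) + ε / ‖r s‖ ^ 3 * (4 / ‖r s‖ - ‖deriv r s‖ ^ 2)) ?_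
    rw [heq s]
    module
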